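/- For any infinite cardinal κ, Δ_{c₀(κ)}^{(c)}(R) = 2R for all R ∈ [0,∞). In particular, for any point-finite cover 𝒰 of c₀(κ) with Lebesgue number ≥ R, one has diam(𝒰) ≥ 2R. -/

import Mathlib

open ENNReal NNReal Set Filter ZeroAtInfty

/-- `U` is a cover of the space. -/
def IsCover {X : Type*} (U : Set (Set X)) : Prop := ⋃₀ U = Set.univ

/-- `U` is point-finite: every point lies in only finitely many members. -/
def PointFinite {X : Type*} (U : Set (Set X)) : Prop :=
  ∀ x : X, {V | V ∈ U ∧ x ∈ V}.Finite

/-- The Lebesgue number of a family of sets. -/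
noncomputable def Leb {X : Type*} [PseudoMetricSpace X] (U : Set (Set X)) : ℝ≥0∞ :=
  sSup {d : ℝ≥0∞ | ∀ E : Set X, EMetric.diam E < d → ∃ V ∈ U, E ⊆ V}

/-- The diameter of a family of sets: the sup of the diameters of its members. -/
noncomputable def covDiam {X : Type*} [PseudoMetricSpace X] (U : Set (Set X)) : ℝ≥0∞ :=
  ⨆ V ∈ U, EMetric.diam V

/-- The modulus `Δ_X^{(c)}`. -/
noncomputable def Δc (X : Type*) [PseudoMetricSpace X] (R : ℝ≥0∞) : ℝ≥0∞ :=
  ⨅ U ∈ {U : Set (Set X) | IsCover U ∧ PointFinite U ∧ R ≤ Leb U}, covDiam U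

/-- The modulus `Δ_X^{(u)}`. -/
noncomputable def Δu (X : Type*) [PseudoMetricSpace X] (r : ℝ≥0∞) : ℝ≥0∞ :=
  ⨆ U ∈ {U : Set (Set X) | IsCover U ∧ PointFinite U ∧ covDiam U ≤ r}, Leb U

/-- The density character: the least cardinality of a dense subset. -/
noncomputable def densChar (X : Type*) [TopologicalSpace X] : Cardinal :=
  sInf {c : Cardinal | ∃ s : Set X, Dense s ∧ Cardinal.mk s = c}

/-- The modulus of continuity (expansion) of a map. -/
noncomputable def omegaMod {X Y : Type*} [PseudoMetricSpace X] [PseudoMetricSpace Y]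
    (f : X → Y) (t : ℝ) : ℝ≥0∞ :=
  ⨆ p ∈ {p : X × X | dist p.1 p.2 ≤ t}, edist (f p.1) (f p.2)

/-- The modulus of compression of a map. -/
noncomputable def rhoMod {X Y : Type*} [PseudoMetricSpace X] [PseudoMetricSpace Y]
    (f : X → Y) (t : ℝ) : ℝ≥0∞ :=
  ⨅ p ∈ {p : X × X | t ≤ dist p.1 p.2}, edist (f p.1) (f p.2)

/-- `c₀(ι)`: real-valued functions on the discrete space `ι` vanishing at infinity,
with the sup-norm metric. -/
def c0Space (ι : Type*) : Type _ :=
  letI : TopologicalSpace ι := ⊥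
  C₀(ι, ℝ)

noncomputable instance c0Space.metricSpace (ι : Type*) : MetricSpace (c0Space ι) :=
  letI : TopologicalSpace ι := ⊥
  (inferInstance : MetricSpace C₀(ι, ℝ))

instance c0Space.funLike (ι : Type*) : FunLike (c0Space ι) ι ℝ :=
  letI : TopologicalSpace ι := ⊥
  (inferInstance : FunLike C₀(ι, ℝ) ι ℝ)

/-- The positive cone `c₀⁺(ι)` with the inherited metric. -/
abbrev c0Pos (ι : Type*) : Type _ := {g : c0Space ι // ∀ i, 0 ≤ g i}

/-!
Lower bound: let `U` be point-finite with Lebesgue number `> r` and let `n` be the number of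
members of `U` containing `0`. On `n` coordinates, the `2ⁿ > n` sign vectors with entries `±r`
are at distance `≤ r` from `0`, so each lies in a common member of `U` with `0`. By pigeonhole
two different sign vectors share a member, whose diameter is then at least their distance `2r`.

Upper bound: for `ε > 0`, the sup-norm balls of radius `s = R + ε/2` around the points `t k`,
`t = R + ε`, `k` a finitely supported integer vector, form a cover of diameter `2R + ε` with
Lebesgue number `≥ R`. It is point-finite because a point `x` lies only in balls with `k i = 0`
wherever `|x i| < t - s`, which is all but finitely many `i`.
-/

section Lebesgue

variable {X : Type*} [PseudoMetricSpace X] {U : Set (Set X)}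

theorem exists_superset_of_ediam_lt_leb {E : Set X} (hE : Metric.ediam E < Leb U) :
    ∃ V ∈ U, E ⊆ V := by
  obtain ⟨d, hd, hEd⟩ := lt_sSup_iff.mp hE
  exact hd E hEd

theorem ediam_le_covDiam {V : Set X} (hV : V ∈ U) : Metric.ediam V ≤ covDiam U :=
  le_iSup₂ (f := fun V (_ : V ∈ U) => Metric.ediam V) V hV

theorem PointFinite.le_covDiam_of_separated (hU : PointFinite U) (p : X) {α : Type*}
    [Fintype α] (x : α → X) {d : ℝ≥0∞} (hx : ∀ a, edist p (x a) < Leb U)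
    (hsep : Pairwise fun a b => d ≤ edist (x a) (x b))
    (hcard : (hU p).toFinset.card < Fintype.card α) : d ≤ covDiam U := by
  have hpair a : Metric.ediam {p, x a} < Leb U := by rw [Metric.ediam_pair]; exact hx a
  choose V hVU hpV using fun a => exists_superset_of_ediam_lt_leb (hpair a)
  have hmaps : ∀ a ∈ Finset.univ, V a ∈ (hU p).toFinset := fun a _ => by
    rw [Set.Finite.mem_toFinset]
    exact ⟨hVU a, hpV a (mem_insert _ _)⟩
  obtain ⟨a, -, b, -, hab, hV⟩ := Finset.exists_ne_map_eq_of_card_lt_of_maps_to hcard hmaps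
  calc d ≤ edist (x a) (x b) := hsep hab
    _ ≤ Metric.ediam (V a) :=
      Metric.edist_le_ediam_of_mem (hpV a (by simp)) (hV ▸ hpV b (by simp))
    _ ≤ covDiam U := ediam_le_covDiam (hVU a)

end Lebesgue

namespace ZeroAtInftyContinuousMap

variable {α β : Type*} [TopologicalSpace α]

section Dist

variable [PseudoMetricSpace β] [Zero β]

theorem dist_apply_le_dist (f g : C₀(α, β)) (x : α) : dist (f x) (g x) ≤ dist f g := by
  rw [← dist_toBCF_eq_dist]
  exact f.toBCF.dist_coe_le_dist (g := g.toBCF) x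

theorem dist_le_iff {f g : C₀(α, β)} {C : ℝ} (hC : 0 ≤ C) :
    dist f g ≤ C ↔ ∀ x, dist (f x) (g x) ≤ C := by
  rw [← dist_toBCF_eq_dist, BoundedContinuousFunction.dist_le hC]
  rfl

end Dist

variable [DiscreteTopology α]

theorem finite_setOf_le_norm [SeminormedAddGroup β] (f : C₀(α, β)) {c : ℝ} (hc : 0 < c) :
    {x | c ≤ ‖f x‖}.Finite := by
  have hf := zero_at_infty f
  rw [cocompact_eq_cofinite] at hf
  refine (mem_cofinite.1 (hf (Metric.ball_mem_nhds 0 hc))).subset fun x hx => ?_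
  simpa using hx

end ZeroAtInftyContinuousMap

section

variable {ι : Type*} [TopologicalSpace ι] [DiscreteTopology ι]

def Finsupp.toZeroAtInfty {β : Type*} [TopologicalSpace β] [Zero β] (f : ι →₀ β) :
    C₀(ι, β) where
  toFun := f
  continuous_toFun := continuous_of_discreteTopology
  zero_at_infty' := by
    rw [cocompact_eq_cofinite]
    refine tendsto_const_nhds.congr' (eventually_cofinite.2 ?_)
    exact f.support.finite_toSet.subset fun i hi => Finsupp.mem_support_iff.2 (Ne.symm hi)

@[simp]
theorem Finsupp.toZeroAtInfty_apply {β : Type*} [TopologicalSpace β] [Zero β] (f : ι →₀ β)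
    (i : ι) : f.toZeroAtInfty i = f i := rfl

end

open ZeroAtInftyContinuousMap

section LowerBound

variable {ι : Type*}

noncomputable def signVector (M : Finset ι) (r : ℝ) (ε : M → Bool) : ι →₀ ℝ :=
  Finsupp.indicator M fun i hi => if ε ⟨i, hi⟩ then r else -r

theorem abs_signVector_le (M : Finset ι) {r : ℝ} (hr : 0 ≤ r) (ε : M → Bool) (i : ι) :
    |signVector M r ε i| ≤ r := by
  classical
  rw [signVector, Finsupp.indicator_apply]
  split_ifs <;> simp [abs_of_nonneg hr, hr]

theorem exists_abs_signVector_sub_eq (M : Finset ι) {r : ℝ} (hr : 0 ≤ r) {ε δ : M → Bool}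
    (h : ε ≠ δ) : ∃ i, |signVector M r ε i - signVector M r δ i| = 2 * r := by
  obtain ⟨⟨i, hi⟩, hεδ⟩ := Function.ne_iff.mp h
  refine ⟨i, ?_⟩
  simp only [signVector, Finsupp.indicator_of_mem hi]
  revert hεδ
  cases ε ⟨i, hi⟩ <;> cases δ ⟨i, hi⟩ <;> simp only [Bool.false_eq_true, ↓reduceIte] <;>
    intro hεδ
  · exact absurd rfl hεδ
  · rw [show -r - r = -(2 * r) by ring, abs_neg, abs_of_nonneg (by positivity)]
  · rw [show r - -r = 2 * r by ring, abs_of_nonneg (by positivity)]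
  · exact absurd rfl hεδ

variable [TopologicalSpace ι] [DiscreteTopology ι]

theorem dist_zero_signVector_le (M : Finset ι) {r : ℝ} (hr : 0 ≤ r) (ε : M → Bool) :
    dist 0 (signVector M r ε).toZeroAtInfty ≤ r :=
  (dist_le_iff hr).2 fun i => by
    simpa [Real.dist_eq, abs_sub_comm] using abs_signVector_le M hr ε i

theorem le_dist_signVector (M : Finset ι) {r : ℝ} (hr : 0 ≤ r) {ε δ : M → Bool} (h : ε ≠ δ) :
    2 * r ≤ dist (signVector M r ε).toZeroAtInfty (signVector M r δ).toZeroAtInfty := by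
  obtain ⟨i, hi⟩ := exists_abs_signVector_sub_eq M hr h
  simpa [Real.dist_eq, hi] using dist_apply_le_dist (signVector M r ε).toZeroAtInfty
    (signVector M r δ).toZeroAtInfty i

theorem two_mul_le_covDiam_of_lt_leb [Infinite ι] {U : Set (Set C₀(ι, ℝ))}
    (hU : PointFinite U) {r : ℝ≥0} (hr : (r : ℝ≥0∞) < Leb U) : 2 * (r : ℝ≥0∞) ≤ covDiam U := by
  classical
  obtain ⟨M, hM⟩ := Infinite.exists_subset_card_eq ι (hU 0).toFinset.card
  have hcard : (hU 0).toFinset.card < Fintype.card (M → Bool) := by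
    simpa [hM] using Nat.lt_two_pow_self
  refine hU.le_covDiam_of_separated 0 (fun ε => (signVector M r ε).toZeroAtInfty)
    (fun ε => ?_) (fun ε δ h => ?_) hcard
  · refine lt_of_le_of_lt ?_ hr
    rw [edist_dist, ← ENNReal.ofReal_coe_nnreal]
    exact ENNReal.ofReal_le_ofReal (dist_zero_signVector_le M r.2 ε)
  · dsimp only
    rw [edist_dist, ← ENNReal.ofReal_coe_nnreal, ← ENNReal.ofReal_ofNat 2,
      ← ENNReal.ofReal_mul zero_le_two]
    exact ENNReal.ofReal_le_ofReal (le_dist_signVector M r.2 h)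

theorem two_mul_le_covDiam_of_le_leb [Infinite ι] {U : Set (Set C₀(ι, ℝ))}
    (hU : PointFinite U) {R : ℝ≥0∞} (hR : R ≤ Leb U) : 2 * R ≤ covDiam U := by
  have hR' : R ≤ covDiam U / 2 := ENNReal.le_of_forall_nnreal_lt fun r hr =>
    (ENNReal.le_div_iff_mul_le (by simp) (by simp)).2 <| by
      rw [mul_comm]; exact two_mul_le_covDiam_of_lt_leb hU (hr.trans_le hR)
  rw [mul_comm]
  exact (ENNReal.le_div_iff_mul_le (by simp) (by simp)).1 hR'

end LowerBound

section UpperBound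

theorem finite_setOf_abs_sub_mul_le (x s : ℝ) {t : ℝ} (ht : 0 < t) :
    {m : ℤ | |x - t * m| ≤ s}.Finite :=
  (Set.finite_Icc ⌈(x - s) / t⌉ ⌊(x + s) / t⌋).subset fun m (hm : |x - t * m| ≤ s) => by
    obtain ⟨h₁, h₂⟩ := abs_le.1 hm
    exact ⟨Int.ceil_le.2 ((div_le_iff₀ ht).2 (by linarith)),
      Int.le_floor.2 ((le_div_iff₀ ht).2 (by linarith))⟩

/-- Take `m = ⌈(inf A + D - s) / t⌉`: then `A ⊆ [inf A, inf A + D] ⊆ [t m - s, t m + s]`. -/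
theorem exists_int_forall_abs_sub_mul_le {A : Set ℝ} {D s t : ℝ} (ht : 0 < t)
    (hD : D + t ≤ 2 * s) (hA : ∀ y ∈ A, ∀ z ∈ A, |y - z| ≤ D) :
    ∃ m : ℤ, ∀ y ∈ A, |y - t * m| ≤ s := by
  rcases A.eq_empty_or_nonempty with rfl | ⟨y₀, hy₀⟩
  · exact ⟨0, by simp⟩
  have hbdd : BddBelow A := ⟨y₀ - D, fun z hz => by linarith [(abs_le.1 (hA y₀ hy₀ z hz)).2]⟩
  set q := (sInf A + D - s) / t
  have hq : t * q = sInf A + D - s := mul_div_cancel₀ _ ht.ne'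
  have hlo : sInf A + D - s ≤ t * ⌈q⌉ := hq ▸ mul_le_mul_of_nonneg_left (Int.le_ceil q) ht.le
  have hhi : t * ⌈q⌉ < sInf A + D - s + t := by
    have := mul_lt_mul_of_pos_left (Int.ceil_lt_add_one q) ht
    rwa [mul_add_one, hq] at this
  refine ⟨⌈q⌉, fun y hy => abs_le.2 ?_⟩
  have hinf_le : sInf A ≤ y := csInf_le hbdd hy
  have hle_inf : y - D ≤ sInf A :=
    le_csInf ⟨y₀, hy₀⟩ fun z hz => by linarith [(abs_le.1 (hA y hy z hz)).2]
  constructor <;> linarith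

variable {ι : Type*} [TopologicalSpace ι]

def cube (s t : ℝ) (k : ι →₀ ℤ) : Set C₀(ι, ℝ) := {x | ∀ i, |x i - t * k i| ≤ s}

variable (ι) in
def cubeCover (s t : ℝ) : Set (Set C₀(ι, ℝ)) :=
  Set.range (cube s t)

theorem ediam_cube_le {s : ℝ} (hs : 0 ≤ s) (t : ℝ) (k : ι →₀ ℤ) :
    Metric.ediam (cube s t k) ≤ ENNReal.ofReal (2 * s) := by
  refine Metric.ediam_le fun x hx y hy => ?_
  rw [edist_dist]
  refine ENNReal.ofReal_le_ofReal ((dist_le_iff (by positivity)).2 fun i => ?_)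
  calc dist (x i) (y i) ≤ |x i - t * k i| + |y i - t * k i| := by
        rw [Real.dist_eq, abs_sub_comm (y i)]; exact abs_sub_le _ _ _
    _ ≤ 2 * s := by linarith [hx i, hy i]

theorem covDiam_cubeCover_le {s : ℝ} (hs : 0 ≤ s) (t : ℝ) :
    covDiam (cubeCover ι s t) ≤ ENNReal.ofReal (2 * s) :=
  iSup₂_le <| by rintro _ ⟨k, rfl⟩; exact ediam_cube_le hs t k

variable [DiscreteTopology ι]

/-- Off the finitely many coordinates where `|x i| ≥ t - s` for a fixed `x ∈ E`, the set `E`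
already lies within `s` of `0` because `D + t ≤ 2 * s`. -/
theorem exists_cube_superset {s t D : ℝ} (hst : s < t) (hD : D + t ≤ 2 * s)
    {E : Set C₀(ι, ℝ)} (hE : ∀ y ∈ E, ∀ z ∈ E, dist y z ≤ D) : ∃ k, E ⊆ cube s t k := by
  classical
  rcases E.eq_empty_or_nonempty with rfl | ⟨x, hx⟩
  · exact ⟨0, empty_subset _⟩
  have hD₀ : 0 ≤ D := dist_self x ▸ hE x hx x hx
  have ht : 0 < t := by linarith
  have hcoord i : ∀ y ∈ E, ∀ z ∈ E, |y i - z i| ≤ D := fun y hy z hz =>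
    (dist_apply_le_dist y z i).trans (hE y hy z hz)
  choose m hm using fun i => exists_int_forall_abs_sub_mul_le (A := (· i) '' E) ht hD
    (by rintro _ ⟨y, hy, rfl⟩ _ ⟨z, hz, rfl⟩; exact hcoord i y hy z hz)
  set F := (finite_setOf_le_norm x (sub_pos.2 hst)).toFinset
  refine ⟨Finsupp.indicator F fun i _ => m i, fun y hy i => ?_⟩
  rw [Finsupp.indicator_apply]
  split_ifs with hi
  · exact hm i _ ⟨y, hy, rfl⟩
  · have hxi : |x i| + s < t := by simpa [F] using hi
    rw [Int.cast_zero, mul_zero, sub_zero]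
    linarith [abs_sub_abs_le_abs_sub (y i) (x i), hcoord i y hy x hx]

theorem cubeCover_isCover {s t : ℝ} (hst : s < t) (hts : t ≤ 2 * s) :
    IsCover (cubeCover ι s t) :=
  eq_univ_of_forall fun x => by
    obtain ⟨k, hk⟩ := exists_cube_superset (D := 0) hst (by linarith) (E := {x}) (by simp)
    exact ⟨cube s t k, ⟨k, rfl⟩, hk rfl⟩

theorem cubeCover_pointFinite {s t : ℝ} (ht : 0 < t) (hst : s < t) :
    PointFinite (cubeCover ι s t) := by
  intro x
  set F := (finite_setOf_le_norm x (sub_pos.2 hst)).toFinset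
  set T := fun i => (finite_setOf_abs_sub_mul_le (x i) s ht).toFinset
  refine ((F.finsupp T).finite_toSet.image (cube s t)).subset ?_
  rintro _ ⟨⟨k, rfl⟩, hx⟩
  refine ⟨k, Finset.mem_finsupp_iff.2 ⟨fun i hi => ?_, fun i _ => by simpa [T] using hx i⟩, rfl⟩
  have hk : (1 : ℝ) ≤ |(k i : ℝ)| := by
    exact_mod_cast Int.one_le_abs (Finsupp.mem_support_iff.1 hi)
  have htk : t ≤ |t * k i| := by rw [abs_mul, abs_of_pos ht]; nlinarith
  suffices t - s ≤ |x i| by simpa [F] using this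
  linarith [abs_sub_abs_le_abs_sub (t * k i) (x i), abs_sub_comm (x i) (t * k i), hx i]

theorem le_leb_cubeCover {R : ℝ≥0} {s t : ℝ} (hst : s < t) (hR : R + t ≤ 2 * s) :
    (R : ℝ≥0∞) ≤ Leb (cubeCover ι s t) := by
  refine le_sSup fun E hE => ?_
  have hE_top : Metric.ediam E ≠ ⊤ := ne_top_of_lt hE
  have hER : (Metric.ediam E).toReal < R := (ENNReal.toReal_lt_toReal hE_top coe_ne_top).2 hE
  obtain ⟨k, hk⟩ := exists_cube_superset hst (D := (Metric.ediam E).toReal) (by linarith)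
    fun y hy z hz => by
      rw [dist_edist]; exact ENNReal.toReal_mono hE_top (Metric.edist_le_ediam_of_mem hy hz)
  exact ⟨cube s t k, ⟨k, rfl⟩, hk⟩

theorem Δc_zeroAtInfty_le_two_mul (R : ℝ≥0) : Δc C₀(ι, ℝ) R ≤ 2 * R := by
  refine ENNReal.le_of_forall_pos_le_add fun ε hε _ => ?_
  have hε' : (0 : ℝ) < ε := hε
  calc Δc C₀(ι, ℝ) R ≤ covDiam (cubeCover ι (R + ε / 2) (R + ε)) :=
        iInf₂_le _ ⟨cubeCover_isCover (by linarith) (by linarith),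
          cubeCover_pointFinite (by positivity) (by linarith),
          le_leb_cubeCover (by linarith) (by linarith)⟩
    _ ≤ ENNReal.ofReal (2 * (R + ε / 2)) := covDiam_cubeCover_le (by positivity) _
    _ = 2 * R + ε := by
      rw [show 2 * ((R : ℝ) + ε / 2) = ((2 * R + ε : ℝ≥0) : ℝ) by push_cast; ring,
        ENNReal.ofReal_coe_nnreal]
      push_cast; rfl

end UpperBound

theorem stmt16 (ι : Type*) [Infinite ι] :
    ∀ R : ℝ≥0, Δc (c0Space ι) R = 2 * R ∧
      ∀ U : Set (Set (c0Space ι)), IsCover U → PointFinite U → (R : ℝ≥0∞) ≤ Leb U →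
        2 * (R : ℝ≥0∞) ≤ covDiam U := by
  let _ : TopologicalSpace ι := ⊥
  have : DiscreteTopology ι := ⟨rfl⟩
  intro R
  exact ⟨le_antisymm (Δc_zeroAtInfty_le_two_mul R)
      (le_iInf₂ fun U hU => two_mul_le_covDiam_of_le_leb hU.2.1 hU.2.2),
    fun U _ hU hR => two_mul_le_covDiam_of_le_leb hU hR⟩
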